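/- For every t in [t_3, 1], the 10×10 matrix C_t (defined blockwise: the upper-left 5×5 block has diagonal entries 2 and entry -ḡ_{(j-i-1 mod 5 mapped appropriately)} off-diagonal as in the paper, the upper-right block is -h(t) times the identity, the lower-left block is -2 times the identity, and the lower-right 5×5 block has diagonal 2, entries -1/t above the diagonal pattern and -t below, cyclically) has rank exactly 5. -/

import Mathlib

/-!
Write `C t` in blocks as `[[U, -h·1], [-2·1, L]]`. The paper's identity `U * L = 2h · 1`
says that the top block row is `-U/2` times the bottom block row `[-2·1, L]`, so the rank of
`C t` is that of the bottom block row, which is `5` because `-2·1` is invertible.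
-/

noncomputable def t3 : ℝ := (11 + 9 * Real.sqrt 2 - 3 * Real.sqrt (31 + 22 * Real.sqrt 2)) / 2

noncomputable def f (t : ℝ) : ℝ :=
  t * (t + 2) ^ 3 * (2 * t + 1) ^ 3 / ((t ^ 2 + t + 1) ^ 2 * (t ^ 2 + 7 * t + 1) ^ 2)

noncomputable def g (p : ℕ) (t : ℝ) : ℝ :=
  2 * t ^ p * (t + 2) ^ p * (2 * t + 1) ^ (3 - p) / ((t ^ 2 + t + 1) * (t ^ 2 + 7 * t + 1))

noncomputable def gbar (p : ℕ) (t : ℝ) : ℝ := 4 * f t / g p t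

noncomputable def h (t : ℝ) : ℝ :=
  2 + 1 / t + t * (t + 2) ^ 4 / ((t ^ 2 + t + 1) * (t ^ 2 + 7 * t + 1))

/-- The upper-left 5×5 block of the Cartan matrix `C_t`:
diagonal entries `2`, entry `-ḡ_{j-i-1}(t)` above and `-g_{i-j-1}(t)` below the diagonal. -/
noncomputable def ULblock (t : ℝ) : Matrix (Fin 5) (Fin 5) ℝ := fun i j =>
  if i = j then 2
  else if i < j then -gbar ((j : ℕ) - (i : ℕ) - 1) t
  else -g ((i : ℕ) - (j : ℕ) - 1) t

/-- The lower-right 5×5 block of `C_t`: diagonal `2`, `-1/t` above, `-t` below the diagonal. -/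
noncomputable def LRblock (t : ℝ) : Matrix (Fin 5) (Fin 5) ℝ := fun i j =>
  if i = j then 2
  else if i < j then -(1 / t)
  else -t

/-- The 10×10 Cartan matrix `C_t` from the paper, with rows and columns indexed by
`{1',…,5'} ⊕ {1,…,5}`.  The upper-right block is `-h(t)·Id` and the lower-left block `-2·Id`. -/
noncomputable def C (t : ℝ) : Matrix (Fin 5 ⊕ Fin 5) (Fin 5 ⊕ Fin 5) ℝ :=
  Matrix.fromBlocks (ULblock t) (Matrix.diagonal fun _ => -h t)
    (Matrix.diagonal fun _ => -2) (LRblock t)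

namespace Matrix

variable {m n p q R : Type*} [CommRing R] [StrongRankCondition R]
  [Fintype n] [Fintype p] [Fintype q]

theorem rank_fromBlocks_mul_left [Fintype m] [DecidableEq n]
    (X : Matrix m n R) (C : Matrix n p R) (D : Matrix n q R) :
    (fromBlocks (X * C) (X * D) C D).rank = (fromCols C D).rank := by
  have hfactor : fromBlocks (X * C) (X * D) C D = fromRows X 1 * fromCols C D := by
    rw [fromRows_mul_fromCols, Matrix.one_mul, Matrix.one_mul]
  have hleftInv :
      fromCols (0 : Matrix n m R) (1 : Matrix n n R) * fromRows X (1 : Matrix n n R) = 1 := by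
    rw [fromCols_mul_fromRows, Matrix.zero_mul, Matrix.one_mul, zero_add]
  rw [hfactor]
  refine le_antisymm (rank_mul_le_right _ _) ?_
  have h := rank_mul_le_right (fromCols (0 : Matrix n m R) (1 : Matrix n n R))
    (fromRows X 1 * fromCols C D)
  rwa [← Matrix.mul_assoc, hleftInv, Matrix.one_mul] at h

theorem rank_fromCols_of_isUnit_left [DecidableEq n] {C : Matrix n n R} (hC : IsUnit C)
    (D : Matrix n q R) : (fromCols C D).rank = Fintype.card n := by
  refine le_antisymm (rank_le_card_height _) ?_
  calc Fintype.card n = C.rank := (rank_of_isUnit C hC).symm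
    _ = ((fromCols C D).submatrix id Sum.inl).rank := rfl
    _ ≤ (fromCols C D).rank := rank_submatrix_le _ _ _

end Matrix

open Matrix

lemma t3_pos : 0 < t3 := by
  have h2 : Real.sqrt 2 ^ 2 = 2 := Real.sq_sqrt (by norm_num)
  have h2' : (1:ℝ) ≤ Real.sqrt 2 := by nlinarith [Real.sqrt_nonneg 2]
  have hsqrt_lt : Real.sqrt (31 + 22 * Real.sqrt 2) < (11 + 9 * Real.sqrt 2) / 3 := by
    rw [Real.sqrt_lt' (by nlinarith)]
    nlinarith
  unfold t3
  nlinarith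

lemma g_mul_g_sub (t : ℝ) {p : ℕ} (hp : p ≤ 3) : g p t * g (3 - p) t = 4 * t ^ 2 * f t := by
  interval_cases p <;> · simp only [g, f]; field_simp; ring

lemma gbar_eq_g_sub_div {t : ℝ} (ht : 0 < t) {p : ℕ} (hp : p ≤ 3) :
    gbar p t = g (3 - p) t / t ^ 2 := by
  have hg : g p t ≠ 0 := by unfold g; positivity
  rw [gbar, div_eq_div_iff hg (by positivity), mul_comm (g (3 - p) t), g_mul_g_sub t hp]
  ring

lemma ULblock_mul_LRblock {t : ℝ} (ht : 0 < t) :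
    ULblock t * LRblock t = (2 * h t) • (1 : Matrix (Fin 5) (Fin 5) ℝ) := by
  ext i j
  fin_cases i <;> fin_cases j <;>
    · simp +decide only [Matrix.mul_apply, Fin.sum_univ_five, ULblock, LRblock, Matrix.smul_apply,
        Matrix.one_apply, Fin.lt_def]
      norm_num [gbar_eq_g_sub_div ht, g, h]
      field_simp
      ring

lemma C_eq_fromBlocks_mul_left {t : ℝ} (ht : 0 < t) :
    C t = fromBlocks ((-2⁻¹ : ℝ) • ULblock t * diagonal fun _ => -2)
      ((-2⁻¹ : ℝ) • ULblock t * LRblock t) (diagonal fun _ => -2) (LRblock t) := by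
  rw [Matrix.smul_mul, Matrix.smul_mul, ULblock_mul_LRblock ht, ← smul_one_eq_diagonal,
    Matrix.mul_smul, Matrix.mul_one, smul_smul, smul_smul,
    show (-2⁻¹ : ℝ) * -2 = 1 by norm_num, show (-2⁻¹ : ℝ) * (2 * h t) = -h t by ring,
    one_smul, smul_one_eq_diagonal, smul_one_eq_diagonal, C]

theorem C_rank : ∀ t ∈ Set.Icc t3 1, (C t).rank = 5 := by
  intro t ht
  have hdiag : IsUnit (diagonal fun _ : Fin 5 => (-2 : ℝ)) :=
    isUnit_diagonal.mpr (Pi.isUnit_iff.mpr fun _ => by norm_num)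
  rw [C_eq_fromBlocks_mul_left (t3_pos.trans_le ht.1), rank_fromBlocks_mul_left,
    rank_fromCols_of_isUnit_left hdiag, Fintype.card_fin]
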